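/- arXiv:2007.12305 — 4 statements merged into one kernel-verified Lean document; each statement's English description precedes it below -/
import Mathlib

section
/- Let R be a commutative ring in which 2 is invertible and let n ≥ 2. Every n×n unitriangular matrix A over R whose entries vanish outside the main diagonal and the first superdiagonal (i.e. A = I + Σᵢ aᵢ Eᵢ,ᵢ₊₁) is a commutator [B, C] of two matrices B, C with B² = C² = I, where B and C are upper triangular with diagonal entries ±1. -/
/-!
As `B` and `C` are involutions, `[B, C] = (B C)²`; so it suffices to find a square root `g` of `A`
and an involution `B` with `B g B = g⁻¹`, and then to take `C = B g`.

For the Jordan block `J = 1 + N`, `N` the upper shift, `B` is the matrix of the substitution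
`t ↦ (1 + t)⁻¹ - 1`, an involutive automorphism of `R[t]/(tⁿ)` that conjugates `N` to `J⁻¹ - 1`.
Because `2` is invertible, `J` has a square root `g` that is a polynomial in `N` (Newton's
iteration), and then `B g B · g` is a unipotent involution, hence `1`.

A general `A` comes from `J` by multiplying the `(i, j)` entry by `aᵢ aᵢ₊₁ ⋯ aⱼ₋₁`; on upper
triangular matrices this is multiplicative even when the `aᵢ` are not units.
-/

open Polynomial

section Algebra

variable {R A : Type*} [CommRing R] [Ring A] [Algebra R A]

theorem eq_one_of_mul_self_eq_one_of_isNilpotent {w : A} (h2 : IsUnit (2 : A)) (hw : w * w = 1)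
    (hnil : IsNilpotent (w - 1)) : w = 1 := by
  have hunit : IsUnit (2 + (w - 1)) :=
    hnil.isUnit_add_left_of_commute h2 (Commute.ofNat_right _ 2)
  have hzero : (w - 1) * (2 + (w - 1)) = 0 := by
    calc (w - 1) * (2 + (w - 1)) = w * w - 1 := by noncomm_ring
      _ = 0 := by rw [hw, sub_self]
  exact sub_eq_zero.mp (hunit.mul_left_eq_zero.mp hzero)

theorem Commute.isNilpotent_mul_sub_one {a b : A} (hab : Commute a b)
    (ha : IsNilpotent (a - 1)) (hb : IsNilpotent (b - 1)) : IsNilpotent (a * b - 1) := by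
  have hc : Commute (a - 1) (b - 1) :=
    (hab.sub_left (Commute.one_left b)).sub_right (Commute.one_right _)
  have hc' : Commute ((a - 1) * (b - 1)) ((a - 1) + (b - 1)) :=
    ((Commute.refl _).mul_left hc.symm).add_right (hc.mul_left (Commute.refl _))
  rw [show a * b - 1 = (a - 1) * (b - 1) + ((a - 1) + (b - 1)) by noncomm_ring]
  exact hc'.isNilpotent_add (hc.isNilpotent_mul_right ha) (hc.isNilpotent_add ha hb)

theorem aeval_conj_of_mul_self_eq_one {b : A} (hb : b * b = 1) (x : A) (p : R[X]) :
    aeval (b * x * b) p = b * aeval x p * b := by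
  simpa [ConjAct.units_smul_def] using aeval_smul p (ConjAct.toConjAct (⟨b, b, hb, hb⟩ : Aˣ)) x

theorem commute_aeval_aeval {x y : A} (h : Commute x y) (p q : R[X]) :
    Commute (aeval x p) (aeval y q) :=
  Algebra.commute_of_mem_adjoin_singleton_of_commute (aeval_mem_adjoin_singleton R y)
    (Algebra.commute_of_mem_adjoin_singleton_of_commute (aeval_mem_adjoin_singleton R x)
      h.symm).symm

theorem isNilpotent_aeval_sub_one {x : A} (hx : IsNilpotent x) {p : R[X]} (hp : X ∣ p - 1) :
    IsNilpotent (aeval x p - 1) := by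
  obtain ⟨q, hq⟩ := hp
  have hxq : aeval x p - 1 = x * aeval x q := by simpa using congrArg (aeval x) hq
  have hcomm : Commute x (aeval x q) := by
    simpa using commute_aeval_aeval (R := R) (Commute.refl x) X q
  rw [hxq]
  exact hcomm.isNilpotent_mul_right hx

theorem aeval_sq_eq_one_add {x : A} {k : ℕ} (hx : x ^ k = 0) {p : R[X]}
    (hp : X ^ k ∣ p ^ 2 - (1 + X)) : aeval x p ^ 2 = 1 + x := by
  obtain ⟨q, hq⟩ := hp
  have := congrArg (aeval x) hq
  rw [map_sub, map_mul, map_pow, map_pow, aeval_X, hx, zero_mul, map_add, map_one, aeval_X] at this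
  exact sub_eq_zero.mp this

theorem exists_X_pow_dvd_sq_sub_one_add_X [Invertible (2 : R)] (k : ℕ) :
    ∃ p : R[X], X ∣ p - 1 ∧ X ^ k ∣ p ^ 2 - (1 + X) := by
  induction k with
  | zero => exact ⟨1, by simp, by simp⟩
  | succ k ih =>
    rcases Nat.eq_zero_or_pos k with rfl | hk
    · exact ⟨1, by simp, ⟨-1, by ring⟩⟩
    obtain ⟨p, hp1, e, he⟩ := ih
    set c := e.coeff 0
    have hp0 : p.coeff 0 = 1 := by
      simpa [sub_eq_zero] using X_dvd_iff.mp hp1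
    obtain ⟨f, hf⟩ : X ∣ e - C c * p := X_dvd_iff.mpr (by simp [c, hp0])
    refine ⟨p - C (⅟2 * c) * X ^ k, ?_, ?_⟩
    · have hXk : (X : R[X]) ^ k = X * X ^ (k - 1) := by rw [← pow_succ', Nat.sub_add_cancel hk]
      rw [hXk, show ∀ u v : R[X], p - u * (X * v) - 1 = (p - 1) - X * (u * v) by intros; ring]
      exact dvd_sub hp1 (dvd_mul_right _ _)
    · refine ⟨f + C (⅟2 * c) ^ 2 * X ^ (k - 1), ?_⟩
      have h2 : C (2 : R) * C ⅟2 = 1 := by rw [← C_mul, mul_invOf_self, C_1]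
      have hX : X ^ (k + 1) * X ^ (k - 1) = (X : R[X]) ^ k * X ^ k := by
        rw [← pow_add, ← pow_add]; congr 1; omega
      calc (p - C (⅟2 * c) * X ^ k) ^ 2 - (1 + X)
          = (p ^ 2 - (1 + X)) - X ^ k * (C (2 : R) * C ⅟2) * C c * p
              + C (⅟2 * c) ^ 2 * (X ^ k * X ^ k) := by rw [C_mul, map_ofNat]; ring
        _ = X ^ k * (e - C c * p) + C (⅟2 * c) ^ 2 * (X ^ (k + 1) * X ^ (k - 1)) := by
          rw [he, h2, hX]; ring
        _ = X ^ (k + 1) * (f + C (⅟2 * c) ^ 2 * X ^ (k - 1)) := by rw [hf]; ring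

theorem SemiconjBy.swap_of_one_add_mul_eq_one {b x y : A} (h : SemiconjBy b x y)
    (h1 : (1 + x) * (1 + y) = 1) (h2 : (1 + y) * (1 + x) = 1) : SemiconjBy b y x := by
  have hu : SemiconjBy b (⟨1 + x, 1 + y, h1, h2⟩ : Aˣ) (⟨1 + y, 1 + x, h2, h1⟩ : Aˣ) :=
    (SemiconjBy.one_right b).add_right h
  have := hu.units_inv_right
  simp only [Units.inv_mk, SemiconjBy, mul_add, add_mul, mul_one, one_mul] at this
  exact add_right_injective b this

theorem conj_aeval_mul_aeval_eq_one [Invertible (2 : R)] {b x : A} (hb : b * b = 1) {k : ℕ}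
    (hx : x ^ k = 0) (hinv : (1 + x) * (1 + b * x * b) = 1) {p : R[X]} (hp1 : X ∣ p - 1)
    (hp : X ^ k ∣ p ^ 2 - (1 + X)) :
    b * aeval x p * b * aeval x p = 1 := by
  set y := b * x * b
  have hinv' : (1 + y) * (1 + x) = 1 := by
    obtain ⟨u, hu⟩ := (IsNilpotent.isUnit_one_add ⟨k, hx⟩ : IsUnit (1 + x))
    rw [← hu] at hinv ⊢
    rw [← Units.inv_eq_of_mul_eq_one_right hinv, Units.inv_mul]
  have hy : y ^ k = 0 := by
    simpa [hx] using aeval_conj_of_mul_self_eq_one (R := R) hb x (X ^ k)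
  have hxy : Commute x y := by
    calc x * y = (1 + x) * (1 + y) - 1 - x - y := by noncomm_ring
      _ = (1 + y) * (1 + x) - 1 - x - y := by rw [hinv, hinv']
      _ = y * x := by noncomm_ring
  rw [← aeval_conj_of_mul_self_eq_one hb]
  set g := aeval x p
  set h := aeval y p
  have hgh : Commute g h := commute_aeval_aeval hxy p p
  have h2 : IsUnit (2 : A) := by
    have := (isUnit_of_invertible (2 : R)).map (algebraMap R A)
    rwa [map_ofNat] at this
  refine eq_one_of_mul_self_eq_one_of_isNilpotent h2 ?_ ?_
  · calc h * g * (h * g) = h ^ 2 * g ^ 2 := by rw [hgh.mul_mul_mul_comm, sq, sq]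
      _ = 1 := by rw [aeval_sq_eq_one_add hy hp, aeval_sq_eq_one_add hx hp, hinv']
  · exact hgh.symm.isNilpotent_mul_sub_one (isNilpotent_aeval_sub_one ⟨k, hy⟩ hp1)
      (isNilpotent_aeval_sub_one ⟨k, hx⟩ hp1)

end Algebra

namespace Matrix

section Triangular

variable {m R : Type*} [LinearOrder m] [Fintype m] [CommRing R]

theorem IsUpperTriangular.mul_apply_self {M N : Matrix m m R} (hM : M.IsUpperTriangular)
    (hN : N.IsUpperTriangular) (i : m) : (M * N) i i = M i i * N i i := by
  rw [mul_apply]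
  refine Finset.sum_eq_single i (fun k _ hki => ?_) (by simp)
  rcases lt_or_gt_of_ne hki with h | h
  · rw [hM h, zero_mul]
  · rw [hN h, mul_zero]

theorem IsUpperTriangular.pow_apply_self [DecidableEq m] {M : Matrix m m R}
    (hM : M.IsUpperTriangular) (k : ℕ) (i : m) : (M ^ k) i i = M i i ^ k := by
  induction k with
  | zero => simp
  | succ k ih => rw [pow_succ, IsUpperTriangular.mul_apply_self (hM.pow k) hM, ih, pow_succ]

theorem IsUpperTriangular.aeval [DecidableEq m] {M : Matrix m m R} (hM : M.IsUpperTriangular)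
    (p : R[X]) : (aeval M p).IsUpperTriangular :=
  Algebra.adjoin_le (S := blockTriangularSubalgebra R R id) (by simpa using hM)
    (aeval_mem_adjoin_singleton R M)

end Triangular

section Shift

variable (R : Type*) [CommRing R] (n : ℕ)

def upperShift : Matrix (Fin n) (Fin n) R := of fun i j => if (j : ℕ) = i + 1 then 1 else 0

variable {R n}

theorem upperShift_pow_mul_apply (k : ℕ) (M : Matrix (Fin n) (Fin n) R) (i j : Fin n) :
    (upperShift R n ^ k * M) i j = if h : (i : ℕ) + k < n then M ⟨i + k, h⟩ j else 0 := by
  induction k generalizing i with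
  | zero => simp
  | succ k ih =>
    rw [pow_succ', mul_assoc, mul_apply]
    by_cases hi : (i : ℕ) + 1 < n
    · rw [Finset.sum_eq_single ⟨i + 1, hi⟩ (fun l _ hl => ?_) (by simp), ih]
      · simp [upperShift, add_assoc, add_comm 1 k]
      · simp only [upperShift, of_apply, ite_mul, one_mul, zero_mul]
        exact if_neg fun h => hl (Fin.ext h)
    · rw [dif_neg (by omega)]
      refine Finset.sum_eq_zero fun l _ => ?_
      simp only [upperShift, of_apply, ite_mul, one_mul, zero_mul]
      exact if_neg (by omega)

theorem upperShift_pow_self : upperShift R n ^ n = 0 := by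
  ext i j
  simpa [Nat.not_lt.mpr (Nat.le_add_left n i)] using upperShift_pow_mul_apply (R := R) n 1 i j

theorem isUpperTriangular_upperShift : (upperShift R n).IsUpperTriangular := by
  intro i j hij
  simp only [upperShift, of_apply]
  rw [if_neg (by simp at hij; omega)]

theorem upperShift_apply_self (i : Fin n) : upperShift R n i i = 0 := by simp [upperShift]

variable [NeZero n]

theorem upperShift_pow_mul_apply_zero (M : Matrix (Fin n) (Fin n) R) (i j : Fin n) :
    (upperShift R n ^ (i : ℕ) * M) 0 j = M i j := by
  simp [upperShift_pow_mul_apply]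

theorem eq_of_semiconjBy_upperShift {M M' Y : Matrix (Fin n) (Fin n) R}
    (hM : SemiconjBy M Y (upperShift R n)) (hM' : SemiconjBy M' Y (upperShift R n))
    (h0 : M 0 = M' 0) : M = M' := by
  ext i j
  have key (M) (hM : SemiconjBy M Y (upperShift R n)) :
      M i j = ∑ l, M 0 l * (Y ^ (i : ℕ)) l j := by
    rw [← upperShift_pow_mul_apply_zero M i j, ← (hM.pow_right i).eq, mul_apply]
  rw [key M hM, key M' hM', h0]

-- In the basis `1, t, …, tⁿ⁻¹` of `R[t]/(tⁿ)`, on whose row vectors `upperShift` acts as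
-- multiplication by `t`, this is the matrix of the substitution `t ↦ Y`.
def rowsOfPowers (Y : Matrix (Fin n) (Fin n) R) : Matrix (Fin n) (Fin n) R :=
  of fun i j => (Y ^ (i : ℕ)) 0 j

theorem rowsOfPowers_zero (Y : Matrix (Fin n) (Fin n) R) :
    rowsOfPowers Y 0 = (1 : Matrix (Fin n) (Fin n) R) 0 := by
  ext j
  simp [rowsOfPowers]

theorem semiconjBy_rowsOfPowers {Y : Matrix (Fin n) (Fin n) R} (hY : Y ^ n = 0) :
    SemiconjBy (rowsOfPowers Y) Y (upperShift R n) := by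
  ext i j
  rw [← pow_one (upperShift R n), upperShift_pow_mul_apply]
  have : (rowsOfPowers Y * Y) i j = (Y ^ ((i : ℕ) + 1)) 0 j := by
    rw [pow_succ, mul_apply, mul_apply]; rfl
  rw [this]
  split_ifs with h
  · rfl
  · rw [show (i : ℕ) + 1 = n by omega, hY, Matrix.zero_apply]

theorem rowsOfPowers_upperShift_mul_apply {W : Matrix (Fin n) (Fin n) R}
    (hW : Commute (upperShift R n) W) (i j : Fin n) :
    rowsOfPowers (upperShift R n * W) i j = (W ^ (i : ℕ)) i j := by
  rw [rowsOfPowers, of_apply, hW.mul_pow, upperShift_pow_mul_apply_zero]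

theorem rowsOfPowers_mul_self {Y : Matrix (Fin n) (Fin n) R} (hY : Y ^ n = 0)
    (h1 : (1 + upperShift R n) * (1 + Y) = 1) (h2 : (1 + Y) * (1 + upperShift R n) = 1) :
    rowsOfPowers Y * rowsOfPowers Y = 1 := by
  have hBY := semiconjBy_rowsOfPowers hY
  refine eq_of_semiconjBy_upperShift (hBY.mul_left (hBY.swap_of_one_add_mul_eq_one h2 h1))
    (SemiconjBy.one_left _) ?_
  ext j
  rw [mul_apply]
  simp_rw [rowsOfPowers_zero]
  rw [← mul_apply, one_mul, rowsOfPowers_zero]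

theorem exists_involution_conj_upperShift :
    ∃ B : Matrix (Fin n) (Fin n) R, B * B = 1 ∧ B.IsUpperTriangular ∧
      (∀ i, B i i = (-1) ^ (i : ℕ)) ∧
      (1 + upperShift R n) * (1 + B * upperShift R n * B) = 1 := by
  set N := upperShift R n
  let : Invertible (1 + N) := (IsNilpotent.isUnit_one_add ⟨n, upperShift_pow_self⟩).invertible
  set W := (1 + N)⁻¹
  have hW : (1 + N) * W = 1 := mul_inv_of_invertible _
  have hW' : W * (1 + N) = 1 := inv_mul_of_invertible _
  have h1N : (1 + N).IsUpperTriangular := blockTriangular_one.add isUpperTriangular_upperShift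
  have hWu : W.IsUpperTriangular := blockTriangular_inv_of_blockTriangular h1N
  have hWd (i : Fin n) : W i i = 1 := by
    simpa [IsUpperTriangular.mul_apply_self h1N hWu, N, upperShift_apply_self] using
      congrFun (congrFun hW i) i
  have hNW' : W + N * W = 1 := by simpa [add_mul] using hW
  have hNW : Commute N (-W) := by
    refine Commute.neg_right (add_left_cancel (hNW'.trans ?_))
    simpa [mul_add, eq_comm] using hW'
  have hYW : 1 + N * -W = W := by
    rw [mul_neg, ← sub_eq_add_neg, sub_eq_iff_eq_add, ← hNW', add_comm]
  have hY : (N * -W) ^ n = 0 := by rw [hNW.mul_pow, upperShift_pow_self, zero_mul]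
  have h1 : (1 + N) * (1 + N * -W) = 1 := by rw [hYW, hW]
  have h2 : (1 + N * -W) * (1 + N) = 1 := by rw [hYW, hW']
  have hBB := rowsOfPowers_mul_self hY h1 h2
  have hBN := (semiconjBy_rowsOfPowers hY).swap_of_one_add_mul_eq_one h2 h1
  refine ⟨rowsOfPowers (N * -W), hBB, fun i j hij => ?_, fun i => ?_, ?_⟩
  · rw [rowsOfPowers_upperShift_mul_apply hNW]
    exact (hWu.neg.pow i) hij
  · rw [rowsOfPowers_upperShift_mul_apply hNW, IsUpperTriangular.pow_apply_self hWu.neg,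
      Matrix.neg_apply, hWd]
  · rw [hBN.eq, mul_assoc, hBB, mul_one, h1]

theorem exists_involutions_mul_mul_mul_eq_one_add_upperShift [Invertible (2 : R)] :
    ∃ B C : Matrix (Fin n) (Fin n) R, B * B = 1 ∧ C * C = 1 ∧
      B.IsUpperTriangular ∧ C.IsUpperTriangular ∧
      (∀ i, B i i = 1 ∨ B i i = -1) ∧ (∀ i, C i i = 1 ∨ C i i = -1) ∧
      B * C * B * C = 1 + upperShift R n := by
  obtain ⟨B, hBB, hBu, hBd, hinv⟩ := exists_involution_conj_upperShift (R := R) (n := n)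
  obtain ⟨p, hp1, hp⟩ := exists_X_pow_dvd_sq_sub_one_add_X (R := R) n
  have hNu := isUpperTriangular_upperShift (R := R) (n := n)
  have hgu : (aeval (upperShift R n) p).IsUpperTriangular := hNu.aeval p
  have hgd (i : Fin n) : aeval (upperShift R n) p i i = 1 := by
    obtain ⟨q, hq⟩ := hp1
    have hg : aeval (upperShift R n) p = 1 + upperShift R n * aeval (upperShift R n) q := by
      simpa [sub_eq_iff_eq_add, add_comm] using congrArg (aeval (upperShift R n)) hq
    rw [hg, add_apply, IsUpperTriangular.mul_apply_self hNu (hNu.aeval q), upperShift_apply_self]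
    simp
  have hg2 : aeval (upperShift R n) p * aeval (upperShift R n) p = 1 + upperShift R n := by
    rw [← sq, aeval_sq_eq_one_add upperShift_pow_self hp]
  refine ⟨B, B * aeval (upperShift R n) p, hBB, ?_, hBu, hBu.mul hgu,
    fun i => hBd i ▸ neg_one_pow_eq_or R i, fun i => ?_, ?_⟩
  · rw [← mul_assoc]
    exact conj_aeval_mul_aeval_eq_one hBB upperShift_pow_self hinv hp1 hp
  · rw [IsUpperTriangular.mul_apply_self hBu hgu, hgd, mul_one, hBd]
    exact neg_one_pow_eq_or R i
  · rw [← mul_assoc B B, hBB, one_mul, mul_assoc, ← mul_assoc B B, hBB, one_mul, hg2]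

end Shift

section Twist

variable {R : Type*} [CommRing R] {n : ℕ}

-- When the `aᵢ` are units, this is conjugation by the diagonal matrix `diag (∏_{t < i} aₜ)`.
def twist (a : ℕ → R) (M : Matrix (Fin n) (Fin n) R) : Matrix (Fin n) (Fin n) R :=
  of fun i j => (∏ t ∈ Finset.Ico (i : ℕ) j, a t) * M i j

variable (a : ℕ → R)

theorem twist_apply_self (M : Matrix (Fin n) (Fin n) R) (i : Fin n) : twist a M i i = M i i := by
  simp [twist]

theorem IsUpperTriangular.twist {M : Matrix (Fin n) (Fin n) R} (hM : M.IsUpperTriangular) :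
    (twist a M).IsUpperTriangular := fun i j hij => by
  simp [Matrix.twist, hM hij]

theorem twist_one : twist a (1 : Matrix (Fin n) (Fin n) R) = 1 := by
  ext i j
  by_cases h : i = j
  · subst h; simp [twist]
  · simp [twist, one_apply_ne h]

theorem twist_mul {M M' : Matrix (Fin n) (Fin n) R} (hM : M.IsUpperTriangular)
    (hM' : M'.IsUpperTriangular) : twist a (M * M') = twist a M * twist a M' := by
  ext i j
  simp only [twist, of_apply, mul_apply, Finset.mul_sum]
  refine Finset.sum_congr rfl fun k _ => ?_
  rcases lt_or_ge k i with hki | hik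
  · simp [hM hki]
  rcases lt_or_ge j k with hjk | hkj
  · simp [hM' hjk]
  rw [← Finset.prod_Ico_consecutive a (Fin.le_def.mp hik) (Fin.le_def.mp hkj)]
  ring

theorem exists_eq_twist_one_add_upperShift {A : Matrix (Fin n) (Fin n) R} (hdiag : ∀ i, A i i = 1)
    (hsupp : ∀ i j : Fin n, j.val ≠ i.val → j.val ≠ i.val + 1 → A i j = 0) :
    ∃ a : ℕ → R, A = twist a (1 + upperShift R n) := by
  refine ⟨fun t => if h : t + 1 < n then A ⟨t, by omega⟩ ⟨t + 1, h⟩ else 0, ?_⟩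
  ext i j
  simp only [twist, of_apply, add_apply, upperShift]
  by_cases hij : i = j
  · subst hij; simp [hdiag]
  by_cases hj : (j : ℕ) = i + 1
  · have hi : (i : ℕ) + 1 < n := hj ▸ j.isLt
    obtain rfl : j = ⟨i + 1, hi⟩ := Fin.ext hj
    simp [one_apply_ne hij, Nat.Ico_succ_singleton, hi]
  · rw [hsupp i j (fun h => hij (Fin.ext h.symm)) hj]
    simp [hj, one_apply_ne hij]

end Twist

end Matrix

open Matrix in
theorem stmt_9 {R : Type*} [CommRing R] [Invertible (2 : R)] (n : ℕ) (hn : 2 ≤ n)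
    (A : Matrix (Fin n) (Fin n) R)
    (hdiag : ∀ i, A i i = 1)
    (hsupp : ∀ i j : Fin n, j.val ≠ i.val → j.val ≠ i.val + 1 → A i j = 0) :
    ∃ B C : Matrix (Fin n) (Fin n) R,
      B * B = 1 ∧ C * C = 1 ∧
      B.BlockTriangular id ∧ C.BlockTriangular id ∧
      (∀ i, B i i = 1 ∨ B i i = -1) ∧ (∀ i, C i i = 1 ∨ C i i = -1) ∧
      A = B * C * B⁻¹ * C⁻¹ := by
  have : NeZero n := ⟨by omega⟩
  obtain ⟨a, rfl⟩ := exists_eq_twist_one_add_upperShift hdiag hsupp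
  obtain ⟨B, C, hBB, hCC, hBu, hCu, hBd, hCd, hBC⟩ :=
    exists_involutions_mul_mul_mul_eq_one_add_upperShift (R := R) (n := n)
  have hB : twist a B * twist a B = 1 := by rw [← twist_mul a hBu hBu, hBB, twist_one]
  have hC : twist a C * twist a C = 1 := by rw [← twist_mul a hCu hCu, hCC, twist_one]
  refine ⟨twist a B, twist a C, hB, hC, hBu.twist a, hCu.twist a,
    fun i => by simpa only [twist_apply_self] using hBd i,
    fun i => by simpa only [twist_apply_self] using hCd i, ?_⟩
  rw [inv_eq_right_inv hB, inv_eq_right_inv hC, ← twist_mul a hBu hCu,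
    ← twist_mul a (hBu.mul hCu) hBu, ← twist_mul a ((hBu.mul hCu).mul hBu) hCu, hBC]
end

section
/- Let R be a commutative ring in which 2 is invertible and let n ≥ 2. Every n×n unitriangular matrix A over R whose entries vanish outside the main diagonal and the first superdiagonal is a commutator [B, C] where B² = −I (B is a skew-involution) and C² = I (C is an involution), with B, C upper triangular, assuming R contains an element i with i² = −1. -/
/-!
Let `N` be the strictly upper part of `A`, so `A = 1 + N`. For `w : ℤ` put
`M_w = ∑ₖ diag ((-1)^i * choose (w/2 - i) k) * Nᵏ` and `H_w = ∑ₖ choose (w/2) k * Nᵏ`.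
These matrices multiply through a twisted convolution of their coefficients, and an alternating
Chu–Vandermonde identity gives `M_w * M_w' = H_(w'-w)`, while the ordinary one gives
`H_w * H_w' = H_(w+w')`. Hence `E = M_(-1)` and `C = M_0` are upper triangular involutions with
`E * C = H_1`, a square root of `H_2 = A`. For `B = ι • E` we get `B * B = -1` and
`B * C * B⁻¹ * C⁻¹ = (E * C) ^ 2 = A`.

Since `4 ^ k * choose (w/2) k` is an integer, all coefficients make sense in `R` once `N` is
replaced by `N / 4`.
-/

open Finset

namespace Ring

variable {R : Type*} [CommRing R] [BinomialRing R]

theorem choose_neg_eq_neg_one_pow_mul (r : R) (n : ℕ) :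
    choose (-r) n = (-1) ^ n * choose (r + n - 1) n := by
  rw [choose_neg, Units.smul_def, Int.coe_negOnePow_natCast, zsmul_eq_mul]
  push_cast
  rfl

theorem succ_mul_choose_succ (r : R) (k : ℕ) :
    (k + 1 : R) * choose r (k + 1) = (r - k) * choose r k := by
  have h := choose_smul_choose r (Nat.le_succ k)
  rw [Nat.choose_succ_self_right, nsmul_eq_mul, show k.succ - k = 1 by omega,
    choose_one_right] at h
  push_cast at h
  rw [h, mul_comm]

theorem sum_antidiagonal_neg_one_pow_mul_choose_mul_choose (z z' : R) (k : ℕ) :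
    ∑ p ∈ antidiagonal k, (-1) ^ p.1 * choose z p.1 * choose (z' - p.1) p.2 =
      choose (z' - z) k := by
  have reflect : ∀ p ∈ antidiagonal k, (-1) ^ p.1 * choose z p.1 * choose (z' - p.1) p.2 =
      (-1) ^ k * (choose z p.1 * choose (k - 1 - z') p.2) := by
    intro p hp
    rw [Finset.HasAntidiagonal.mem_antidiagonal] at hp
    rw [show z' - p.1 = -(p.1 - z') by ring, choose_neg_eq_neg_one_pow_mul, ← hp]
    push_cast
    rw [show (p.1 : R) - z' + p.2 - 1 = p.1 + p.2 - 1 - z' by ring]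
    ring
  rw [sum_congr rfl reflect, ← mul_sum, ← add_choose_eq _ (Commute.all _ _),
    show z' - z = -(z - z') by ring, choose_neg_eq_neg_one_pow_mul]
  ring_nf

end Ring

theorem four_pow_mul_choose_neg_half (k : ℕ) :
    (4 : ℚ) ^ k * Ring.choose (-1 / 2 : ℚ) k = (-1) ^ k * k.centralBinom := by
  induction k with
  | zero => simp
  | succ k ih =>
    have hc := Nat.succ_mul_centralBinom_succ k
    apply mul_left_cancel₀ (show (k + 1 : ℚ) ≠ 0 by positivity)
    calc (k + 1 : ℚ) * (4 ^ (k + 1) * Ring.choose (-1 / 2 : ℚ) (k + 1))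
        = 4 * (-1 / 2 - k) * (4 ^ k * Ring.choose (-1 / 2 : ℚ) k) := by
          linear_combination 4 ^ (k + 1) * Ring.succ_mul_choose_succ (-1 / 2 : ℚ) k
      _ = (k + 1 : ℚ) * ((-1) ^ (k + 1) * (k + 1).centralBinom) := by
          rw [ih]
          have hc' : ((k + 1 : ℕ) : ℚ) * (k + 1).centralBinom =
              2 * (2 * k + 1) * k.centralBinom := by
            exact_mod_cast hc
          push_cast at hc'
          linear_combination (-1) ^ k * hc'

section CoeffMatrix

variable {R : Type*} [CommRing R]

/-- The matrix `∑ₖ diagonal (c · k) * Nᵏ`, where `N` has superdiagonal `a`, zeros elsewhere. -/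
def coeffMatrix (n : ℕ) (a : ℕ → R) (c : ℕ → ℕ → R) : Matrix (Fin n) (Fin n) R :=
  Matrix.of fun i j => if (i : ℕ) ≤ j then c i (j - i) * ∏ t ∈ Ico (i : ℕ) j, a t else 0

variable {n : ℕ}

theorem exists_eq_coeffMatrix_of_bidiagonal {A : Matrix (Fin n) (Fin n) R}
    (hdiag : ∀ i, A i i = 1)
    (hsupp : ∀ i j : Fin n, j.val ≠ i.val → j.val ≠ i.val + 1 → A i j = 0) :
    ∃ a : ℕ → R, A = coeffMatrix n a fun _ k => if k ≤ 1 then 1 else 0 := by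
  refine ⟨fun t => if h : t + 1 < n then A ⟨t, by omega⟩ ⟨t + 1, h⟩ else 0, ?_⟩
  ext i j
  rw [coeffMatrix, Matrix.of_apply]
  by_cases hij : (i : ℕ) ≤ j
  · rw [if_pos hij]
    rcases (show (j : ℕ) = i ∨ (j : ℕ) = i + 1 ∨ (i : ℕ) + 1 < j by omega) with h | h | h
    · simp [Fin.ext h, hdiag]
    · have hj : j = ⟨i + 1, by omega⟩ := Fin.ext h
      simp [hj, show (i : ℕ) + 1 < n by omega]
    · simp [show ¬ (j : ℕ) - i ≤ 1 by omega, hsupp i j (by omega) (by omega)]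
  · simp [hij, hsupp i j (by omega) (by omega)]

variable (a : ℕ → R)

theorem coeffMatrix_blockTriangular (c : ℕ → ℕ → R) :
    (coeffMatrix n a c).BlockTriangular id :=
  fun _ _ hji => if_neg (not_le.mpr hji)

theorem coeffMatrix_mul (c d : ℕ → ℕ → R) :
    coeffMatrix n a c * coeffMatrix n a d =
      coeffMatrix n a fun i k => ∑ p ∈ antidiagonal k, c i p.1 * d (i + p.1) p.2 := by
  ext i j
  set G : ℕ → R := fun l =>
    (if (i : ℕ) ≤ l then c i (l - i) * ∏ t ∈ Ico (i : ℕ) l, a t else 0) *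
      (if l ≤ j then d l (j - l) * ∏ t ∈ Ico l (j : ℕ), a t else 0) with hG
  have hsum : (coeffMatrix n a c * coeffMatrix n a d) i j = ∑ l ∈ range n, G l :=
    Fin.sum_univ_eq_sum_range G n
  rw [hsum, coeffMatrix, Matrix.of_apply]
  split_ifs with hij
  · have hsub : Ico (i : ℕ) (j + 1) ⊆ range n := fun l hl => by
      simp only [mem_Ico, mem_range] at hl ⊢; omega
    have hout : ∀ l ∈ range n, l ∉ Ico (i : ℕ) (j + 1) → G l = 0 := fun l _ hl => by
      rcases (not_and_or.mp (mem_Ico.not.mp hl)) with h | h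
      · simp [hG, h]
      · simp [hG, show ¬ l ≤ j by omega]
    rw [← sum_subset hsub hout, sum_Ico_eq_sum_range,
      show (j : ℕ) + 1 - i = ((j : ℕ) - i).succ by omega,
      ← Nat.sum_antidiagonal_eq_sum_range_succ (fun t _ => G (i + t)), sum_mul]
    refine sum_congr rfl fun p hp => ?_
    rw [HasAntidiagonal.mem_antidiagonal] at hp
    have hmid : (i : ℕ) ≤ i + p.1 ∧ i + p.1 ≤ j := by omega
    simp only [hG, if_pos hmid.1, if_pos hmid.2, Nat.add_sub_cancel_left,
      show (j : ℕ) - (i + p.1) = p.2 by omega, ← prod_Ico_consecutive a hmid.1 hmid.2]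
    ring
  · refine sum_eq_zero fun l _ => ?_
    by_cases hil : (i : ℕ) ≤ l
    · simp [hG, show ¬ l ≤ j by omega]
    · simp [hG, hil]

theorem coeffMatrix_eq_one : coeffMatrix n a (fun _ k => if k = 0 then 1 else 0) = 1 := by
  ext i j
  rw [coeffMatrix, Matrix.of_apply, Matrix.one_apply]
  by_cases hij : i = j
  · simp [hij]
  · have : (j : ℕ) - i ≠ 0 ∨ ¬ (i : ℕ) ≤ j := by omega
    grind

theorem coeffMatrix_mul_weights (u : R) (c : ℕ → ℕ → R) :
    coeffMatrix n (fun t => u * a t) c = coeffMatrix n a fun i k => c i k * u ^ k := by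
  ext i j
  simp only [coeffMatrix, Matrix.of_apply, prod_mul_distrib, prod_const, Nat.card_Ico]
  split_ifs <;> ring

end CoeffMatrix

theorem Int.cast_ringChoose {S : Type*} [Ring S] [BinomialRing S] (r : ℤ) (k : ℕ) :
    ((Ring.choose r k : ℤ) : S) = Ring.choose (r : S) k :=
  Ring.map_choose (Int.castRingHom S) r k

theorem exists_intCast_eq_four_pow_mul_choose_half (w : ℤ) (k : ℕ) :
    ∃ y : ℤ, (y : ℚ) = 4 ^ k * Ring.choose ((w : ℚ) / 2) k := by
  obtain ⟨q, rfl | rfl⟩ := Int.even_or_odd' w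
  · refine ⟨4 ^ k * Ring.choose q k, ?_⟩
    push_cast
    rw [Int.cast_ringChoose, mul_div_cancel_left₀ _ two_ne_zero]
  · refine ⟨∑ p ∈ antidiagonal k,
      4 ^ p.1 * Ring.choose (q + 1) p.1 * ((-1) ^ p.2 * p.2.centralBinom), ?_⟩
    rw [show ((2 * q + 1 : ℤ) : ℚ) / 2 = ((q + 1 : ℤ) : ℚ) + -1 / 2 by push_cast; ring,
      Ring.add_choose_eq _ (Commute.all _ _), mul_sum]
    push_cast
    refine sum_congr rfl fun p hp => ?_
    rw [HasAntidiagonal.mem_antidiagonal] at hp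
    rw [← four_pow_mul_choose_neg_half, Int.cast_ringChoose, ← hp, pow_add]
    push_cast
    ring

noncomputable def fourPowMulChooseHalf (w : ℤ) (k : ℕ) : ℤ :=
  (exists_intCast_eq_four_pow_mul_choose_half w k).choose

theorem cast_fourPowMulChooseHalf (w : ℤ) (k : ℕ) :
    (fourPowMulChooseHalf w k : ℚ) = 4 ^ k * Ring.choose ((w : ℚ) / 2) k :=
  (exists_intCast_eq_four_pow_mul_choose_half w k).choose_spec

theorem sum_antidiagonal_neg_one_pow_mul_fourPowMulChooseHalf (w w' : ℤ) (k : ℕ) :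
    ∑ p ∈ antidiagonal k,
      (-1) ^ p.1 * fourPowMulChooseHalf w p.1 * fourPowMulChooseHalf (w' - 2 * p.1) p.2 =
      fourPowMulChooseHalf (w' - w) k := by
  apply Int.cast_injective (α := ℚ)
  push_cast [cast_fourPowMulChooseHalf]
  rw [show ((w' : ℚ) - w) / 2 = w' / 2 - w / 2 by ring,
    ← Ring.sum_antidiagonal_neg_one_pow_mul_choose_mul_choose, mul_sum]
  refine sum_congr rfl fun p hp => ?_
  rw [HasAntidiagonal.mem_antidiagonal] at hp
  rw [show ((w' : ℚ) - 2 * p.1) / 2 = w' / 2 - p.1 by ring, ← hp, pow_add]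
  ring

theorem sum_antidiagonal_fourPowMulChooseHalf_mul (w w' : ℤ) (k : ℕ) :
    ∑ p ∈ antidiagonal k, fourPowMulChooseHalf w p.1 * fourPowMulChooseHalf w' p.2 =
      fourPowMulChooseHalf (w + w') k := by
  apply Int.cast_injective (α := ℚ)
  push_cast [cast_fourPowMulChooseHalf]
  rw [show ((w : ℚ) + w') / 2 = w / 2 + w' / 2 by ring, Ring.add_choose_eq _ (Commute.all _ _),
    mul_sum]
  refine sum_congr rfl fun p hp => ?_
  rw [HasAntidiagonal.mem_antidiagonal] at hp
  rw [← hp, pow_add]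
  ring

theorem fourPowMulChooseHalf_zero (k : ℕ) :
    fourPowMulChooseHalf 0 k = if k = 0 then 1 else 0 := by
  apply Int.cast_injective (α := ℚ)
  push_cast [cast_fourPowMulChooseHalf]
  rw [zero_div, Ring.choose_zero_ite]
  split_ifs with hk <;> simp [hk]

theorem fourPowMulChooseHalf_two (k : ℕ) :
    fourPowMulChooseHalf 2 k = if k = 0 then 1 else if k = 1 then 4 else 0 := by
  apply Int.cast_injective (α := ℚ)
  push_cast [cast_fourPowMulChooseHalf]
  rw [div_self two_ne_zero, ← Nat.cast_one, Ring.choose_natCast]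
  rcases k with _ | _ | k <;> simp [Nat.choose_eq_zero_of_lt]

section ChooseHalfMatrices

variable {R : Type*} [CommRing R] (n : ℕ) (a : ℕ → R)

/- With `a` the superdiagonal of `N / 4`, these are the matrices `H_w` and `M_w` above. -/

noncomputable def chooseHalfMatrix (w : ℤ) : Matrix (Fin n) (Fin n) R :=
  coeffMatrix n a fun _ k => (fourPowMulChooseHalf w k : R)

noncomputable def alternatingChooseHalfMatrix (w : ℤ) : Matrix (Fin n) (Fin n) R :=
  coeffMatrix n a fun i k => (-1) ^ i * (fourPowMulChooseHalf (w - 2 * i) k : R)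

variable {n}

theorem chooseHalfMatrix_mul (w w' : ℤ) :
    chooseHalfMatrix n a w * chooseHalfMatrix n a w' = chooseHalfMatrix n a (w + w') := by
  rw [chooseHalfMatrix, chooseHalfMatrix, coeffMatrix_mul, chooseHalfMatrix]
  congr 1
  funext i k
  rw [← sum_antidiagonal_fourPowMulChooseHalf_mul]
  push_cast
  rfl

theorem chooseHalfMatrix_zero : chooseHalfMatrix n a 0 = 1 := by
  rw [chooseHalfMatrix]
  simp_rw [fourPowMulChooseHalf_zero]
  push_cast
  exact coeffMatrix_eq_one a

theorem coeffMatrix_bidiagonal_eq_chooseHalfMatrix_two [Invertible (2 : R)] :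
    coeffMatrix n a (fun _ k => if k ≤ 1 then 1 else 0) =
      chooseHalfMatrix n (fun t => ⅟2 ^ 2 * a t) 2 := by
  rw [chooseHalfMatrix, coeffMatrix_mul_weights]
  congr 1
  funext _ k
  rw [fourPowMulChooseHalf_two]
  rcases k with _ | _ | k
  · simp
  · norm_num
    rw [show (4 : R) = 2 ^ 2 by norm_num, ← mul_pow, mul_invOf_self, one_pow]
  · simp

theorem alternatingChooseHalfMatrix_mul (w w' : ℤ) :
    alternatingChooseHalfMatrix n a w * alternatingChooseHalfMatrix n a w' =
      chooseHalfMatrix n a (w' - w) := by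
  rw [alternatingChooseHalfMatrix, alternatingChooseHalfMatrix, coeffMatrix_mul, chooseHalfMatrix]
  congr 1
  funext i k
  rw [show w' - w = (w' - 2 * i) - (w - 2 * i) by ring,
    ← sum_antidiagonal_neg_one_pow_mul_fourPowMulChooseHalf]
  push_cast
  refine sum_congr rfl fun p _ => ?_
  have hsign : (-1 : R) ^ i * (-1) ^ (i + p.1) = (-1) ^ p.1 := by
    rw [pow_add, ← mul_assoc, ← mul_pow, neg_one_mul, neg_neg, one_pow, one_mul]
  rw [show w' - 2 * ((i : ℤ) + p.1) = w' - 2 * i - 2 * p.1 by ring, ← hsign]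
  ring

theorem alternatingChooseHalfMatrix_mul_self (w : ℤ) :
    alternatingChooseHalfMatrix n a w * alternatingChooseHalfMatrix n a w = 1 := by
  rw [alternatingChooseHalfMatrix_mul, sub_self, chooseHalfMatrix_zero]

end ChooseHalfMatrices

theorem Matrix.smul_mul_mul_inv_mul_inv_of_mul_self {R m : Type*} [CommRing R] [Fintype m]
    [DecidableEq m] {ι : R} (hι : ι * ι = -1) {E C : Matrix m m R} (hE : E * E = 1)
    (hC : C * C = 1) : ι • E * C * (ι • E)⁻¹ * C⁻¹ = E * C * (E * C) := by
  have hEinv : (ι • E)⁻¹ = -(ι • E) := Matrix.inv_eq_right_inv <| by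
    rw [mul_neg, smul_mul_smul_comm, hι, hE, neg_smul, one_smul, neg_neg]
  rw [hEinv, Matrix.inv_eq_right_inv hC]
  simp only [mul_neg, Matrix.smul_mul, Matrix.mul_smul, smul_smul, hι, neg_smul, one_smul,
    neg_neg, mul_assoc]

theorem stmt_10_general {R : Type*} [CommRing R] [Invertible (2 : R)]
    (ι : R) (hι : ι * ι = -1) (n : ℕ)
    (A : Matrix (Fin n) (Fin n) R)
    (hdiag : ∀ i, A i i = 1)
    (hsupp : ∀ i j : Fin n, j.val ≠ i.val → j.val ≠ i.val + 1 → A i j = 0) :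
    ∃ B C : Matrix (Fin n) (Fin n) R,
      B * B = -1 ∧ C * C = 1 ∧
      B.BlockTriangular id ∧ C.BlockTriangular id ∧
      A = B * C * B⁻¹ * C⁻¹ := by
  obtain ⟨a, hA⟩ := exists_eq_coeffMatrix_of_bidiagonal hdiag hsupp
  rw [coeffMatrix_bidiagonal_eq_chooseHalfMatrix_two] at hA
  set b : ℕ → R := fun t => ⅟2 ^ 2 * a t
  set E := alternatingChooseHalfMatrix n b (-1)
  set C := alternatingChooseHalfMatrix n b 0
  have hE : E * E = 1 := alternatingChooseHalfMatrix_mul_self b _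
  have hEC : E * C = chooseHalfMatrix n b 1 := by
    rw [alternatingChooseHalfMatrix_mul]
    norm_num
  have hETri : E.BlockTriangular id := coeffMatrix_blockTriangular b _
  refine ⟨ι • E, C, ?_, alternatingChooseHalfMatrix_mul_self b _, fun i j hij => ?_,
    coeffMatrix_blockTriangular b _, ?_⟩
  · rw [smul_mul_smul_comm, hι, hE, neg_smul, one_smul]
  · rw [Matrix.smul_apply, hETri hij, smul_zero]
  · rw [Matrix.smul_mul_mul_inv_mul_inv_of_mul_self hι hE
      (alternatingChooseHalfMatrix_mul_self b _), hEC, chooseHalfMatrix_mul, hA]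
    norm_num

theorem stmt_10 {R : Type*} [CommRing R] [Invertible (2 : R)]
    (ι : R) (hι : ι * ι = -1) (n : ℕ) (hn : 2 ≤ n)
    (A : Matrix (Fin n) (Fin n) R)
    (hdiag : ∀ i, A i i = 1)
    (hsupp : ∀ i j : Fin n, j.val ≠ i.val → j.val ≠ i.val + 1 → A i j = 0) :
    ∃ B C : Matrix (Fin n) (Fin n) R,
      B * B = -1 ∧ C * C = 1 ∧
      B.BlockTriangular id ∧ C.BlockTriangular id ∧
      A = B * C * B⁻¹ * C⁻¹ :=
  stmt_10_general ι hι n A hdiag hsupp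
end

section
/- Let ω ∈ ℂ be a primitive k-th root of unity, k ≥ 2, and suppose n ≥ 2 with a ∈ ℂ, a ≠ 0. The diagonal matrix diag(a, a⁻¹) ∈ SL_2(ℂ) is a product of two matrices of finite order k, provided a ∉ {0, 1, −1}. -/
/-! By Cayley–Hamilton a `2 × 2` matrix of trace `ω + ω⁻¹` and determinant `1` satisfies
`X² = (ω + ω⁻¹) X - 1`, so it is diagonalizable with eigenvalues `ω, ω⁻¹` as soon as `ω ≠ ω⁻¹`,
i.e. `k ≥ 3`, and then `X ^ k = 1`. The diagonal matrix `diag(a, a⁻¹)` factors as `X Y` with both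
factors of this trace and determinant when `a ≠ -1`: take `X = [[p, 1], [pq - 1, q]]` and
`Y = X⁻¹ diag(a, a⁻¹)`, where `p + q = t` and `tr Y = qa + p/a = t` force `q = t / (1 + a)`.
For `k = 2` two involutions of trace `0` do the job. -/

open Matrix

theorem pow_eq_smul_add_smul_of_mul_eq_smul {R A : Type*} [CommSemiring R] [Semiring A]
    [Algebra R A] {e f x : A} {α β : R} (hef : e + f = 1) (he : e * x = α • e)
    (hf : f * x = β • f) (n : ℕ) : x ^ n = α ^ n • e + β ^ n • f := by
  induction n with
  | zero => simpa using hef.symm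
  | succ n ih =>
    rw [pow_succ, ih, add_mul, smul_mul_assoc, smul_mul_assoc, he, hf, smul_smul, smul_smul,
      pow_succ, pow_succ]

theorem pow_eq_one_of_mul_self_eq {K A : Type*} [Field K] [Ring A] [Algebra K A] {ω : K}
    {k : ℕ} (hωk : ω ^ k = 1) (hω : ω ≠ ω⁻¹) {x : A} (hx : x * x = (ω + ω⁻¹) • x - 1) :
    x ^ k = 1 := by
  have hω0 : ω ≠ 0 := by rintro rfl; simp at hω
  have hδ : ω - ω⁻¹ ≠ 0 := sub_ne_zero.2 hω
  -- `e` and `f` are the projections onto the `ω`- and `ω⁻¹`-eigenspaces of `x`.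
  have key := pow_eq_smul_add_smul_of_mul_eq_smul (x := x) (α := ω) (β := ω⁻¹)
    (e := (ω - ω⁻¹)⁻¹ • (x - ω⁻¹ • 1)) (f := (ω - ω⁻¹)⁻¹ • (ω • 1 - x))
    (by rw [← smul_add, sub_add_sub_cancel', ← sub_smul, inv_smul_smul₀ hδ])
    (by simp only [smul_mul_assoc, sub_mul, one_mul, hx]; match_scalars <;> field_simp; ring)
    (by simp only [smul_mul_assoc, sub_mul, one_mul, hx]; match_scalars <;> field_simp; ring) k
  rw [key, hωk, inv_pow, hωk, inv_one, one_smul, one_smul, ← smul_add, sub_add_sub_cancel',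
    ← sub_smul, inv_smul_smul₀ hδ]

theorem Matrix.mul_self_fin_two {R : Type*} [CommRing R] (M : Matrix (Fin 2) (Fin 2) R) :
    M * M = M.trace • M - M.det • 1 := by
  rw [eta_fin_two M]
  ext i j
  fin_cases i <;> fin_cases j <;> simp [trace_fin_two_of, det_fin_two_of] <;> ring

theorem Matrix.pow_eq_one_of_trace_eq_of_det_eq_one {K : Type*} [Field K] {ω : K} {k : ℕ}
    (hωk : ω ^ k = 1) (hω : ω ≠ ω⁻¹) {M : Matrix (Fin 2) (Fin 2) K}
    (htr : M.trace = ω + ω⁻¹) (hdet : M.det = 1) : M ^ k = 1 :=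
  pow_eq_one_of_mul_self_eq hωk hω (by rw [mul_self_fin_two, htr, hdet, one_smul])

theorem Matrix.exists_mul_eq_diag_of_trace_eq {K : Type*} [Field K] (t a : K) (ha : a ≠ 0)
    (h1a : 1 + a ≠ 0) :
    ∃ X Y : Matrix (Fin 2) (Fin 2) K, X.trace = t ∧ X.det = 1 ∧ Y.trace = t ∧ Y.det = 1 ∧
      X * Y = !![a, 0; 0, a⁻¹] := by
  set p := t * a / (1 + a)
  set q := t / (1 + a)
  refine ⟨!![p, 1; p * q - 1, q], !![q * a, -a⁻¹; (1 - p * q) * a, p * a⁻¹], ?_, ?_, ?_, ?_, ?_⟩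
  · simp only [trace_fin_two_of, p, q]; field_simp; ring
  · simp only [det_fin_two_of]; ring
  · simp only [trace_fin_two_of, p, q]; field_simp; ring
  · simp only [det_fin_two_of]; field_simp; ring
  · ext i j; fin_cases i <;> fin_cases j <;> simp [p, q] <;> field_simp <;> ring

theorem stmt_14_general (k : ℕ) (hk : 2 ≤ k) (ω : ℂ) (hω : IsPrimitiveRoot ω k)
    (a : ℂ) (ha0 : a ≠ 0) (ham1 : a ≠ -1) :
    ∃ X Y : Matrix (Fin 2) (Fin 2) ℂ,
      X ^ k = 1 ∧ Y ^ k = 1 ∧ (!![a, 0; 0, a⁻¹] : Matrix (Fin 2) (Fin 2) ℂ) = X * Y := by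
  obtain rfl | hk3 := hk.eq_or_lt
  · refine ⟨!![0, 1; 1, 0], !![0, a⁻¹; a, 0], ?_, ?_, ?_⟩ <;>
      simp [sq, one_fin_two, ha0]
  have hω2 : ω ^ 2 ≠ 1 := hω.pow_ne_one_of_pos_of_lt two_ne_zero hk3
  have hωinv : ω ≠ ω⁻¹ := fun h ↦ hω2 (by
    rw [sq]; nth_rewrite 2 [h]; exact mul_inv_cancel₀ (hω.ne_zero (by omega)))
  obtain ⟨X, Y, hXtr, hXdet, hYtr, hYdet, hXY⟩ :=
    exists_mul_eq_diag_of_trace_eq (ω + ω⁻¹) a ha0 (fun h ↦ ham1 (by linear_combination h))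
  exact ⟨X, Y, pow_eq_one_of_trace_eq_of_det_eq_one hω.pow_eq_one hωinv hXtr hXdet,
    pow_eq_one_of_trace_eq_of_det_eq_one hω.pow_eq_one hωinv hYtr hYdet, hXY.symm⟩

theorem stmt_14 (k : ℕ) (hk : 2 ≤ k) (ω : ℂ) (hω : IsPrimitiveRoot ω k)
    (a : ℂ) (ha0 : a ≠ 0) (ha1 : a ≠ 1) (ham1 : a ≠ -1) :
    ∃ X Y : Matrix (Fin 2) (Fin 2) ℂ,
      X ^ k = 1 ∧ Y ^ k = 1 ∧ (!![a, 0; 0, a⁻¹] : Matrix (Fin 2) (Fin 2) ℂ) = X * Y :=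
  stmt_14_general k hk ω hω a ha0 ham1
end

section
/- Let A ∈ SL_n(ℂ) be a non-scalar matrix. Then A is similar (conjugate in GL_n(ℂ)) to a product L·U where L is lower unitriangular and U is upper unitriangular. -/
/-!
Induct on the size. A non-scalar `B` has a non-eigenvector, so after conjugation
`B = [[a, x], [y, Z]]` with `y ≠ 0`. Conjugating by the shear `[[1, ψ], [0, 1]]`, where
`a + ψ ⬝ᵥ y = 1`, gives pivot `1` and Schur complement `S = Z - y (x + ψ Z)` of determinant `1`;
and `[[1, x], [y, S + y x]] = [[1, 0], [y, 1]] [[1, x], [0, S]]` is similar to a unitriangular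
product as soon as `S` is. To recurse, `S` must be `1` or non-scalar. A scalar `S` of determinant
`1` is an `n`-th root of unity `α`, and since `B` is invertible each `α` is reached by at most one
`ψ`. For `n = 1` only `α = 1` occurs; for `n ≥ 2` the hyperplane `a + ψ ⬝ᵥ y = 1` is infinite,
so some `ψ` avoids every `α ≠ 1`.
-/

namespace Matrix

section Bordered

variable {α : Type*} {n : ℕ}

/-- The block matrix `[[a, x], [y, Z]]`: first row `(a, x)`, first column `(a, y)`. -/
def bordered (a : α) (x y : Fin n → α) (Z : Matrix (Fin n) (Fin n) α) :
    Matrix (Fin (n + 1)) (Fin (n + 1)) α :=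
  of (vecCons (vecCons a x) fun i => vecCons (y i) (Z i))

variable {a : α} {x y : Fin n → α} {Z : Matrix (Fin n) (Fin n) α}

@[simp] lemma bordered_zero_zero : bordered a x y Z 0 0 = a := rfl
@[simp] lemma bordered_zero_succ (j : Fin n) : bordered a x y Z 0 j.succ = x j := rfl
@[simp] lemma bordered_succ_zero (i : Fin n) : bordered a x y Z i.succ 0 = y i := rfl
@[simp] lemma bordered_succ_succ (i j : Fin n) : bordered a x y Z i.succ j.succ = Z i j := rfl

@[simp] lemma bordered_submatrix_succ_succ : (bordered a x y Z).submatrix Fin.succ Fin.succ = Z :=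
  rfl

lemma bordered_eta (M : Matrix (Fin (n + 1)) (Fin (n + 1)) α) :
    bordered (M 0 0) (fun j => M 0 j.succ) (fun i => M i.succ 0) (M.submatrix Fin.succ Fin.succ) =
      M := by
  ext i j
  cases i using Fin.cases <;> cases j using Fin.cases <;> rfl

variable {R : Type*} [CommRing R] {a a' : R} {x y x' y' : Fin n → R}
  {Z Z' : Matrix (Fin n) (Fin n) R}

lemma bordered_mul_bordered :
    bordered a x y Z * bordered a' x' y' Z' =
      bordered (a * a' + x ⬝ᵥ y') (a • x' + x ᵥ* Z') (a' • y + Z *ᵥ y')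
        (vecMulVec y x' + Z * Z') := by
  ext i j
  cases i using Fin.cases <;> cases j using Fin.cases <;>
    simp [mul_apply, Fin.sum_univ_succ, dotProduct, vecMul, mulVec, vecMulVec_apply, mul_comm]

@[simp] lemma bordered_one_zero_zero_one : bordered 1 0 0 (1 : Matrix (Fin n) (Fin n) R) = 1 := by
  ext i j
  cases i using Fin.cases <;> cases j using Fin.cases <;>
    simp [one_apply, (Fin.succ_ne_zero _).symm]

lemma vecCons_vecMul_bordered (s : R) (ψ : Fin n → R) :
    vecCons s ψ ᵥ* bordered a x y Z = vecCons (s * a + ψ ⬝ᵥ y) (s • x + ψ ᵥ* Z) := by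
  ext j
  cases j using Fin.cases <;> simp [vecMul, dotProduct, Fin.sum_univ_succ]

lemma det_bordered_zero_left : (bordered a x 0 Z).det = a * Z.det := by
  simp [det_succ_column_zero, Fin.sum_univ_succ]

lemma det_bordered_zero_top : (bordered a 0 y Z).det = a * Z.det := by
  simp [det_succ_row_zero, Fin.sum_univ_succ]

lemma det_bordered_one : (bordered 1 x y Z).det = (Z - vecMulVec y x).det := by
  have h : bordered 1 x y Z = bordered 1 0 y 1 * bordered 1 x 0 (Z - vecMulVec y x) := by
    simp [bordered_mul_bordered]
  rw [h, det_mul, det_bordered_zero_top, det_bordered_zero_left]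
  simp

end Bordered

section Unitriangular

variable {ι R : Type*}

def IsLowerUnitriangular [LT ι] [Zero R] [One R] (L : Matrix ι ι R) : Prop :=
  (∀ i j, i < j → L i j = 0) ∧ ∀ i, L i i = 1

def IsUpperUnitriangular [LT ι] [Zero R] [One R] (U : Matrix ι ι R) : Prop :=
  (∀ i j, j < i → U i j = 0) ∧ ∀ i, U i i = 1

def HasUnitriangularLU [LT ι] [Fintype ι] [NonAssocSemiring R] (M : Matrix ι ι R) : Prop :=
  ∃ L U, IsLowerUnitriangular L ∧ IsUpperUnitriangular U ∧ M = L * U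

lemma hasUnitriangularLU_one [LinearOrder ι] [Fintype ι] [NonAssocSemiring R] :
    HasUnitriangularLU (1 : Matrix ι ι R) :=
  ⟨1, 1, ⟨fun _ _ h => one_apply_ne h.ne, one_apply_eq⟩,
    ⟨fun _ _ h => one_apply_ne h.ne', one_apply_eq⟩, (mul_one 1).symm⟩

variable {n : ℕ}

lemma IsLowerUnitriangular.bordered [Zero R] [One R] {L : Matrix (Fin n) (Fin n) R}
    (hL : IsLowerUnitriangular L) (y : Fin n → R) : IsLowerUnitriangular (bordered 1 0 y L) := by
  refine ⟨fun i j hij => ?_, fun i => ?_⟩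
  · cases i using Fin.cases <;> cases j using Fin.cases
    · exact absurd hij (lt_irrefl 0)
    · rfl
    · exact absurd hij (Fin.succ_pos _).not_gt
    · exact hL.1 _ _ (Fin.succ_lt_succ_iff.mp hij)
  · cases i using Fin.cases
    · rfl
    · exact hL.2 _

lemma IsUpperUnitriangular.bordered [Zero R] [One R] {U : Matrix (Fin n) (Fin n) R}
    (hU : IsUpperUnitriangular U) (x : Fin n → R) : IsUpperUnitriangular (bordered 1 x 0 U) := by
  refine ⟨fun i j hij => ?_, fun i => ?_⟩
  · cases i using Fin.cases <;> cases j using Fin.cases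
    · exact absurd hij (lt_irrefl 0)
    · exact absurd hij (Fin.succ_pos _).not_gt
    · rfl
    · exact hU.1 _ _ (Fin.succ_lt_succ_iff.mp hij)
  · cases i using Fin.cases
    · rfl
    · exact hU.2 _

variable [CommRing R]

lemma HasUnitriangularLU.bordered {S : Matrix (Fin n) (Fin n) R} (hS : HasUnitriangularLU S)
    (x y : Fin n → R) : HasUnitriangularLU (bordered 1 x y (S + vecMulVec y x)) := by
  obtain ⟨L, U, hL, hU, rfl⟩ := hS
  refine ⟨_, _, hL.bordered y, hU.bordered x, ?_⟩
  simp [bordered_mul_bordered, add_comm]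

end Unitriangular

section Conjugation

variable {R : Type*} [CommRing R] {n : ℕ}

lemma _root_.IsConj.det_eq {ι : Type*} [Fintype ι] [DecidableEq ι] {A B : Matrix ι ι R}
    (h : IsConj A B) : A.det = B.det :=
  isConj_iff_eq.mp (detMonoidHom.map_isConj h)

lemma exists_isConj_bordered_of_isConj {S S' : Matrix (Fin n) (Fin n) R} (h : IsConj S S')
    (x y : Fin n → R) :
    ∃ x' y', IsConj (bordered 1 x y (S + vecMulVec y x))
      (bordered 1 x' y' (S' + vecMulVec y' x')) := by
  obtain ⟨c, hc⟩ := h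
  let D : (Matrix (Fin (n + 1)) (Fin (n + 1)) R)ˣ :=
    ⟨bordered 1 0 0 c, bordered 1 0 0 ↑c⁻¹, by simp [bordered_mul_bordered],
      by simp [bordered_mul_bordered]⟩
  refine ⟨x ᵥ* ↑c⁻¹, ↑c *ᵥ y, D, ?_⟩
  have hS : (c : Matrix (Fin n) (Fin n) R) * S = S' * c := hc
  simp only [SemiconjBy, D, bordered_mul_bordered]
  simp [mul_add, add_mul, hS, vecMulVec_mul, mul_vecMulVec, vecMul_vecMul]

lemma exists_isConj_bordered_one {a : R} {x y ψ : Fin n → R} {Z : Matrix (Fin n) (Fin n) R}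
    (h : a + ψ ⬝ᵥ y = 1) :
    ∃ x', IsConj (bordered a x y Z)
      (bordered 1 x' y (Z - vecMulVec y (x + ψ ᵥ* Z) + vecMulVec y x')) := by
  let T : (Matrix (Fin (n + 1)) (Fin (n + 1)) R)ˣ :=
    ⟨bordered 1 ψ 0 1, bordered 1 (-ψ) 0 1, by simp [bordered_mul_bordered],
      by simp [bordered_mul_bordered]⟩
  refine ⟨x + ψ ᵥ* Z - ψ, T, ?_⟩
  simp only [SemiconjBy, T, bordered_mul_bordered]
  simp [h, vecMulVec_sub]

end Conjugation

section Pivot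

variable {K : Type*} [Field K] {n : ℕ} {a : K} {x y : Fin n → K} {Z : Matrix (Fin n) (Fin n) K}

lemma exists_dotProduct_eq (hy : y ≠ 0) (c : K) : ∃ ψ, ψ ⬝ᵥ y = c := by
  obtain ⟨i, hi⟩ : ∃ i, y i ≠ 0 := Function.ne_iff.mp hy
  exact ⟨Pi.single i (c / y i), by simp [single_dotProduct, hi]⟩

lemma infinite_setOf_dotProduct_eq [Infinite K] (hn : 2 ≤ n) (hy : y ≠ 0) (c : K) :
    {ψ : Fin n → K | ψ ⬝ᵥ y = c}.Infinite := by
  obtain ⟨i, hi⟩ : ∃ i, y i ≠ 0 := Function.ne_iff.mp hy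
  have : Nontrivial (Fin n) := Fin.nontrivial_iff_two_le.mpr hn
  obtain ⟨j, hj⟩ := exists_ne i
  obtain ⟨ψ₀, hψ₀⟩ := exists_dotProduct_eq hy c
  let w : Fin n → K := Pi.single j (y i) - Pi.single i (y j)
  refine Set.infinite_of_injective_forall_mem (f := fun t : K => ψ₀ + t • w) (fun s t hst => ?_)
    (fun t => ?_)
  · simpa [w, hj, hi] using congrFun hst j
  · simp [w, add_dotProduct, sub_dotProduct, single_dotProduct, hψ₀, mul_comm]

lemma subsingleton_setOf_schur_eq_smul (hB : IsUnit (bordered a x y Z).det) (hy : y ≠ 0)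
    (c α : K) :
    {ψ : Fin n → K | ψ ⬝ᵥ y = c ∧ Z - vecMulVec y (x + ψ ᵥ* Z) = α • 1}.Subsingleton := by
  rintro ψ ⟨hψc, hψ⟩ ψ' ⟨hψ'c, hψ'⟩
  have hZ : ψ ᵥ* Z = ψ' ᵥ* Z := by
    have h : vecMulVec y ((x + ψ ᵥ* Z) - (x + ψ' ᵥ* Z)) = 0 := by
      rw [vecMulVec_sub, sub_eq_zero]
      exact sub_right_injective (hψ.trans hψ'.symm)
    simpa [hy, sub_eq_zero] using h
  have hinj := vecMul_injective_iff_isUnit.mpr ((isUnit_iff_isUnit_det _).mpr hB)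
  have h : vecCons 0 ψ ᵥ* bordered a x y Z = vecCons 0 ψ' ᵥ* bordered a x y Z := by
    simp only [vecCons_vecMul_bordered, hψc, hψ'c, hZ]
  simpa using hinj h

lemma exists_dotProduct_eq_forall_schur_ne_smul [Infinite K] (hn : 2 ≤ n)
    (hB : IsUnit (bordered a x y Z).det) (hy : y ≠ 0) (c : K) (F : Finset K) :
    ∃ ψ, ψ ⬝ᵥ y = c ∧ ∀ α ∈ F, Z - vecMulVec y (x + ψ ᵥ* Z) ≠ α • 1 := by
  have hbad : (⋃ α ∈ F, {ψ | ψ ⬝ᵥ y = c ∧ Z - vecMulVec y (x + ψ ᵥ* Z) = α • 1}).Finite :=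
    F.finite_toSet.biUnion fun α _ => (subsingleton_setOf_schur_eq_smul hB hy c α).finite
  obtain ⟨ψ, hψ, hψF⟩ := ((infinite_setOf_dotProduct_eq hn hy c).sdiff hbad).nonempty
  exact ⟨ψ, hψ, fun α hα h => hψF (Set.mem_biUnion hα ⟨hψ, h⟩)⟩

lemma exists_add_dotProduct_eq_one_schur_ne_smul [Infinite K]
    (hB : IsUnit (bordered a x y Z).det) (hy : y ≠ 0) :
    ∃ ψ, a + ψ ⬝ᵥ y = 1 ∧ ∀ α : K, α ^ n = 1 → Z - vecMulVec y (x + ψ ᵥ* Z) = α • 1 → α = 1 := by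
  classical
  rcases Nat.lt_or_ge n 2 with hn | hn
  · obtain ⟨ψ, hψ⟩ := exists_dotProduct_eq hy (1 - a)
    refine ⟨ψ, by rw [hψ]; ring, fun α hα _ => ?_⟩
    interval_cases n
    · exact absurd (Subsingleton.elim y 0) hy
    · simpa using hα
  · obtain ⟨ψ, hψ, hF⟩ := exists_dotProduct_eq_forall_schur_ne_smul hn hB hy (1 - a)
      ((Polynomial.nthRootsFinset n (1 : K)).erase 1)
    refine ⟨ψ, by rw [hψ]; ring, fun α hα h => ?_⟩
    by_contra hα1
    have hroot : α ∈ Polynomial.nthRootsFinset n (1 : K) :=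
      (Polynomial.mem_nthRootsFinset (by omega) (1 : K)).mpr hα
    exact hF α (Finset.mem_erase.mpr ⟨hα1, hroot⟩) h

lemma exists_isUnit_det_mulVec_single_zero {v : Fin (n + 1) → K} (hv : v ≠ 0) :
    ∃ C : Matrix (Fin (n + 1)) (Fin (n + 1)) K, IsUnit C.det ∧ C *ᵥ Pi.single 0 1 = v := by
  obtain ⟨k, hk⟩ : ∃ k, v k ≠ 0 := Function.ne_iff.mp hv
  refine ⟨(updateCol 1 k v).submatrix id (Equiv.swap 0 k), ?_, ?_⟩
  · rw [det_permute', ← cramer_apply, cramer_one]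
    simp only [Equiv.Perm.sign_swap', isUnit_iff_ne_zero]
    split_ifs <;> simp [hk]
  · ext i
    simp

lemma exists_isConj_bordered_of_not_scalar {B : Matrix (Fin (n + 1)) (Fin (n + 1)) K}
    (hB : ¬∃ α : K, B = α • 1) : ∃ a x y Z, y ≠ 0 ∧ IsConj B (bordered a x y Z) := by
  obtain ⟨v, hv⟩ : ∃ v, LinearIndependent K ![v, B *ᵥ v] := by
    by_contra! h
    obtain ⟨α, hα⟩ := (toLin' B).exists_eq_smul_id_of_forall_notLinearIndependent h
    exact hB ⟨α, by simpa using congrArg LinearMap.toMatrix' hα⟩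
  obtain ⟨C, hC, hCv⟩ : ∃ C, IsUnit (det C) ∧ C *ᵥ Pi.single 0 1 = v :=
    exists_isUnit_det_mulVec_single_zero (hv.ne_zero 0)
  set M := C⁻¹ * B * C with hM
  refine ⟨M 0 0, fun j => M 0 j.succ, fun i => M i.succ 0, M.submatrix Fin.succ Fin.succ, ?_, ?_⟩
  · intro hy
    have hCM : C * M = B * C := by
      rw [hM, ← mul_assoc, ← mul_assoc, mul_nonsing_inv C hC, one_mul]
    have hMe : M *ᵥ Pi.single 0 1 = M 0 0 • Pi.single 0 1 := by
      ext i
      cases i using Fin.cases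
      · simp
      · simpa using congrFun hy _
    have hBv : B *ᵥ v = M 0 0 • v := by
      rw [← hCv, mulVec_mulVec, ← hCM, ← mulVec_mulVec, hMe, mulVec_smul]
    have h := (LinearIndependent.pair_iff.mp hv (M 0 0) (-1) (by simp [hBv])).2
    exact one_ne_zero (neg_eq_zero.mp h)
  · rw [bordered_eta]
    refine ⟨(nonsingInvUnit C hC)⁻¹, ?_⟩
    show C⁻¹ * B = M * C⁻¹
    rw [hM, mul_assoc _ C, mul_nonsing_inv C hC, mul_one]

end Pivot

theorem exists_isConj_hasUnitriangularLU {K : Type*} [Field K] [Infinite K] :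
    ∀ {n : ℕ} (B : Matrix (Fin n) (Fin n) K), B.det = 1 → (∀ α : K, B = α • 1 → B = 1) →
      ∃ M, IsConj B M ∧ HasUnitriangularLU M
  | 0, B, _, _ => ⟨B, .refl B, Subsingleton.elim 1 B ▸ hasUnitriangularLU_one⟩
  | n + 1, B, hdet, hB => by
    by_cases hs : ∃ α : K, B = α • 1
    · obtain ⟨α, hα⟩ := hs
      exact ⟨B, .refl B, (hB α hα).symm ▸ hasUnitriangularLU_one⟩
    obtain ⟨a, x, y, Z, hy, hB₁⟩ := exists_isConj_bordered_of_not_scalar hs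
    have hdet₁ : (bordered a x y Z).det = 1 := hB₁.det_eq ▸ hdet
    obtain ⟨ψ, hψ, hroot⟩ := exists_add_dotProduct_eq_one_schur_ne_smul (hdet₁ ▸ isUnit_one) hy
    set S := Z - vecMulVec y (x + ψ ᵥ* Z)
    obtain ⟨x₂, hB₂⟩ := exists_isConj_bordered_one (x := x) (Z := Z) hψ
    have hdetS : S.det = 1 := by
      rw [← add_sub_cancel_right S (vecMulVec y x₂), ← det_bordered_one, ← hB₂.det_eq, hdet₁]
    obtain ⟨S', hSS', hS'⟩ := exists_isConj_hasUnitriangularLU S hdetS fun α hα => by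
      rw [hα, hroot α (by simpa [hα] using hdetS) hα, one_smul]
    obtain ⟨x', y', hB₃⟩ := exists_isConj_bordered_of_isConj hSS' x₂ y
    exact ⟨_, hB₁.trans (hB₂.trans hB₃), hS'.bordered x' y'⟩

end Matrix

theorem stmt_15 {n : ℕ} (A : Matrix (Fin n) (Fin n) ℂ)
    (hA : A.det = 1) (hns : ¬ ∃ α : ℂ, A = α • (1 : Matrix (Fin n) (Fin n) ℂ)) :
    ∃ P L U : Matrix (Fin n) (Fin n) ℂ,
      IsUnit P.det ∧
      (∀ i j : Fin n, i < j → L i j = 0) ∧ (∀ i, L i i = 1) ∧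
      (∀ i j : Fin n, j < i → U i j = 0) ∧ (∀ i, U i i = 1) ∧
      P * A * P⁻¹ = L * U := by
  obtain ⟨M, ⟨c, hc⟩, L, U, hL, hU, rfl⟩ :=
    Matrix.exists_isConj_hasUnitriangularLU A hA fun α hα => absurd ⟨α, hα⟩ hns
  refine ⟨c, L, U, (Matrix.isUnit_iff_isUnit_det _).mp c.isUnit, hL.1, hL.2, hU.1, hU.2, ?_⟩
  rw [← Matrix.coe_units_inv, hc.eq, mul_assoc, Units.mul_inv, mul_one]
end
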